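/- Let ρ' > ρ ≥ 1 and let f : [0,T]² → ℝ be continuous. If the 2d ρ-variation ‖f‖_{ρ-var;[s₁,s₂]×[t₁,t₂]} (defined via grid partitions) is finite, then the controlled 2d ρ'-variation ⦀f⦀_{ρ'-var;[s₁,s₂]×[t₁,t₂]} (defined via arbitrary rectangular partitions of the rectangle) is finite, with C_{ρ,ρ'} ⦀f⦀_{ρ'-var} ≤ ‖f‖_{ρ-var} ≤ ⦀f⦀_{ρ-var}; in particular ‖f‖_{ρ'-var;[s,t]×[u,v]}^{ρ'} ≤ ω([s,t]×[u,v]) where ω([s,t]×[u,v]) := ⦀f⦀_{ρ'-var;[s,t]×[u,v]}^{ρ'} is a superadditive 2d control. -/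

import Mathlib

open Finset Set
open scoped ENNReal

def IsPartitionOn (a b : ℝ) (n : ℕ) (τ : ℕ → ℝ) : Prop :=
  Monotone τ ∧ τ 0 = a ∧ τ n = b

def rectIncr (R : ℝ → ℝ → ℝ) (s t u v : ℝ) : ℝ :=
  R t v - R t u - R s v + R s u

/-- 2d `p`-variation via grid partitions. -/
noncomputable def pVar2d (p : ℝ) (R : ℝ → ℝ → ℝ) (a b c d : ℝ) : ℝ≥0∞ :=
  ⨆ (n : ℕ) (m : ℕ) (τ : ℕ → ℝ) (σ : ℕ → ℝ)
    (_ : IsPartitionOn a b n τ) (_ : IsPartitionOn c d m σ),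
    ENNReal.ofReal ((∑ i ∈ Finset.range n, ∑ j ∈ Finset.range m,
      |rectIncr R (τ i) (τ (i + 1)) (σ j) (σ (j + 1))| ^ p) ^ (1 / p))

/-- A finite partition of `[a,b]×[c,d]` into essentially disjoint subrectangles. -/
def IsRectPartition (a b c d : ℝ) (k : ℕ) (r : ℕ → ℝ × ℝ × ℝ × ℝ) : Prop :=
  (∀ i < k, (r i).1 ≤ (r i).2.1 ∧ (r i).2.2.1 ≤ (r i).2.2.2) ∧
  (⋃ i ∈ Finset.range k,
      Set.Icc (r i).1 (r i).2.1 ×ˢ Set.Icc (r i).2.2.1 (r i).2.2.2)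
    = Set.Icc a b ×ˢ Set.Icc c d ∧
  (∀ i < k, ∀ j < k, i ≠ j →
    Disjoint (Set.Ioo (r i).1 (r i).2.1 ×ˢ Set.Ioo (r i).2.2.1 (r i).2.2.2)
      (Set.Ioo (r j).1 (r j).2.1 ×ˢ Set.Ioo (r j).2.2.1 (r j).2.2.2))

/-- Controlled 2d `p`-variation: supremum over arbitrary rectangular partitions. -/
noncomputable def cVar2d (p : ℝ) (f : ℝ → ℝ → ℝ) (a b c d : ℝ) : ℝ≥0∞ :=
  ⨆ (k : ℕ) (r : ℕ → ℝ × ℝ × ℝ × ℝ) (_ : IsRectPartition a b c d k r),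
    ENNReal.ofReal ((∑ i ∈ Finset.range k,
      |rectIncr f (r i).1 (r i).2.1 (r i).2.2.1 (r i).2.2.2| ^ p) ^ (1 / p))

/-!
A grid is a rectangular partition, which gives `‖f‖_{ρ-var} ≤ ⦀f⦀_{ρ-var}`; partitions of the pieces
of a partition glue to a partition of the whole, which gives superadditivity of `⦀f⦀_{ρ'-var}^ρ'`.

The substance is `⦀f⦀_{ρ'-var} ≲ ‖f‖_{ρ-var}`. Let `n` pairwise disjoint subrectangles have
increments at least `v`. Their corners have at most `2 n + 1` coordinates per side, padded to a
grid of `2 ^ L` points, `L = ⌊log₂ n⌋ + 2`. Cutting the index ranges of each rectangle into maximal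
dyadic blocks, at most two of each size, writes its increment as a sum over at most
`4 (L + 1) ^ 2` dyadic cells, so one cell carries a `1 / (4 (L + 1) ^ 2)` share. A pigeonhole over
the `(L + 1) ^ 2` shapes of cells leaves `n / (L + 1) ^ 2` rectangles whose chosen cells are
distinct cells of one grid, so `n v ^ ρ ≤ C(n) ‖f‖_{ρ-var} ^ ρ` with `C(n)` polylogarithmic in `n`.
Listing the rectangles of a partition by decreasing increment and applying this to the first `N`
bounds the `N`-th increment by `(C(N) / N) ^ (1 / ρ) ‖f‖_{ρ-var}`, and `∑ (C(N) / N) ^ (ρ' / ρ)`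
converges because `ρ' > ρ`.
-/

lemma Finset.exists_bijOn_range {ι : Type*} [Nonempty ι] (s : Finset ι) :
    ∃ φ : ℕ → ι, Set.BijOn φ (range #s) s := by
  classical
  refine ⟨fun t => if h : t < #s then s.equivFin.symm ⟨t, h⟩ else Classical.arbitrary ι,
    fun t ht => ?_, fun t ht u hu h => ?_, fun x hx => ?_⟩
  · rw [Finset.coe_range, Set.mem_Iio] at ht
    simp [ht]
  · rw [Finset.coe_range, Set.mem_Iio] at ht hu
    simp only [ht, hu, dite_true, Subtype.coe_inj, EmbeddingLike.apply_eq_iff_eq,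
      Fin.mk.injEq] at h
    exact h
  · refine ⟨s.equivFin ⟨x, hx⟩, by simp, ?_⟩
    simp

lemma ENNReal.iSup_rpow {ι : Sort*} (u : ι → ℝ≥0∞) {p : ℝ} (hp : 0 < p) :
    (⨆ i, u i) ^ p = ⨆ i, u i ^ p :=
  (ENNReal.orderIsoRpow p hp).map_iSup u

lemma ENNReal.ofReal_rpow_one_div_rpow {S p : ℝ} (hS : 0 ≤ S) (hp : 0 < p) :
    ENNReal.ofReal (S ^ (1 / p)) ^ p = ENNReal.ofReal S := by
  rw [ENNReal.ofReal_rpow_of_nonneg (Real.rpow_nonneg hS _) hp.le, ← Real.rpow_mul hS,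
    one_div_mul_cancel hp.ne', Real.rpow_one]

lemma ENNReal.sum_iSup_le {α ι : Type*} {s : Finset α} {g : α → ι → ℝ≥0∞} {z : ℝ≥0∞}
    (h : ∀ c : α → ι, ∑ a ∈ s, g a (c a) ≤ z) : ∑ a ∈ s, ⨆ x, g a x ≤ z := by
  classical
  have hchoice : ∀ a, ⨆ x, g a x = ⨆ c : α → ι, g a (c a) := fun a =>
    le_antisymm (iSup_le fun x => le_iSup_of_le (fun _ => x) le_rfl) (iSup_le fun c => le_iSup _ _)
  simp_rw [hchoice]
  rw [ENNReal.finsetSum_iSup fun c c' =>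
    ⟨fun a => if g a (c a) ≤ g a (c' a) then c' a else c a, fun a => ?_⟩]
  · exact iSup_le h
  · dsimp only
    split_ifs with hle
    exacts [⟨hle, le_rfl⟩, ⟨le_rfl, (not_le.1 hle).le⟩]

lemma Finset.exists_monotone_enum {α : Type*} [LinearOrder α] {a b : α} (T : Finset α)
    (ha : a ∈ T) (hT : ∀ t ∈ T, a ≤ t ∧ t ≤ b) :
    ∃ x : ℕ → α, Monotone x ∧ x 0 = a ∧ (∀ j, #T ≤ j → x j = b) ∧ ∀ t ∈ T, ∃ j < #T, x j = t := by
  set e := T.orderEmbOfFin rfl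
  refine ⟨fun j => if h : j < #T then e ⟨j, h⟩ else b, fun j j' hjj' => ?_, ?_,
    fun j hj => dif_neg (not_lt.2 hj), fun t ht => ?_⟩
  · dsimp only
    split_ifs with h h'
    · exact e.monotone (Fin.mk_le_mk.2 hjj')
    · exact (hT _ (T.orderEmbOfFin_mem rfl _)).2
    · exact absurd (hjj'.trans_lt ‹_›) h
    · exact le_rfl
  · have h0 : 0 < #T := Finset.card_pos.2 ⟨a, ha⟩
    simp only [h0, dite_true, e, Finset.orderEmbOfFin_zero rfl h0]
    exact le_antisymm (T.min'_le a ha) (hT _ (T.min'_mem _)).1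
  · obtain ⟨i, hi⟩ : t ∈ Set.range e := by rw [Finset.range_orderEmbOfFin]; exact ht
    exact ⟨i, i.2, by simp [i.2, hi]⟩

lemma Finset.injOn_card_filter_le {ι α : Type*} [LinearOrder α] (s : Finset ι) {key : ι → α}
    (hkey : Set.InjOn key s) : Set.InjOn (fun i => #{j ∈ s | key i ≤ key j}) s := by
  intro i hi i' hi' h
  by_contra hne
  wlog hlt : key i < key i' generalizing i i'
  · exact this hi' hi h.symm (Ne.symm hne)
      ((not_lt.1 hlt).lt_of_ne fun h' => hne (hkey hi hi' h'.symm))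
  have hsub : {j ∈ s | key i' ≤ key j} ⊂ {j ∈ s | key i ≤ key j} := by
    refine (Finset.ssubset_iff_of_subset fun j hj => ?_).2
      ⟨i, Finset.mem_filter.2 ⟨hi, le_rfl⟩, fun hm => not_le.2 hlt (Finset.mem_filter.1 hm).2⟩
    rw [Finset.mem_filter] at hj ⊢
    exact ⟨hj.1, hlt.le.trans hj.2⟩
  exact (Finset.card_lt_card hsub).ne' h

lemma Monotone.biUnion_range_Icc {τ : ℕ → ℝ} (hτ : Monotone τ) {n : ℕ} (hn : 0 < n) :
    ⋃ i ∈ range n, Icc (τ i) (τ (i + 1)) = Icc (τ 0) (τ n) := by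
  induction n, hn using Nat.le_induction with
  | base => simp
  | succ n hn ih =>
    rw [Finset.range_add_one, Finset.set_biUnion_insert, ih, Set.union_comm,
      Set.Icc_union_Icc_eq_Icc (hτ n.zero_le) (hτ n.le_succ)]

lemma sum_range_le_sum_range_add_two {F : ℕ → ℝ} (hF : ∀ i, 0 ≤ F i) (n : ℕ) :
    ∑ i ∈ range n, F (i + 1) ≤ ∑ i ∈ range (n + 2), F i :=
  calc ∑ i ∈ range n, F (i + 1) ≤ ∑ i ∈ range (n + 1), F (i + 1) :=
        Finset.sum_le_sum_of_subset_of_nonneg (Finset.range_subset_range.2 n.le_succ)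
          fun _ _ _ => hF _
    _ ≤ ∑ i ∈ range (n + 1), F (i + 1) + F 0 := le_add_of_nonneg_right (hF 0)
    _ = ∑ i ∈ range (n + 2), F i := (Finset.sum_range_succ' F (n + 1)).symm

lemma two_mul_add_one_le_two_pow_log_add_two (n : ℕ) : 2 * n + 1 ≤ 2 ^ (Nat.log 2 n + 2) := by
  have := Nat.lt_pow_succ_log_self one_lt_two n
  rw [pow_succ]
  omega

lemma rpow_le_of_mul_rpow_le {N w C V ρ ρ' : ℝ} (hρ : 0 < ρ) (hρ' : 0 ≤ ρ') (hN : 0 < N)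
    (hw : 0 ≤ w) (hC : 0 ≤ C) (hV : 0 ≤ V) (h : N * w ^ ρ ≤ C * V ^ ρ) :
    w ^ ρ' ≤ (C / N) ^ (ρ' / ρ) * V ^ ρ' :=
  calc w ^ ρ' = (w ^ ρ) ^ (ρ' / ρ) := by rw [← Real.rpow_mul hw, mul_div_cancel₀ _ hρ.ne']
    _ ≤ (C / N * V ^ ρ) ^ (ρ' / ρ) := by
        refine Real.rpow_le_rpow (Real.rpow_nonneg hw _) ?_ (div_nonneg hρ' hρ.le)
        rw [div_mul_eq_mul_div, le_div_iff₀ hN]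
        linarith
    _ = (C / N) ^ (ρ' / ρ) * V ^ ρ' := by
        rw [Real.mul_rpow (div_nonneg hC hN.le) (Real.rpow_nonneg hV _), ← Real.rpow_mul hV,
          mul_div_cancel₀ _ hρ.ne']

namespace DyadicBlock

/-- The block `p = (e, q)` stands for the index interval `[q * 2 ^ e, (q + 1) * 2 ^ e)`. -/
def lo (p : ℕ × ℕ) : ℕ := p.2 * 2 ^ p.1

def hi (p : ℕ × ℕ) : ℕ := (p.2 + 1) * 2 ^ p.1

def parent (p : ℕ × ℕ) : ℕ × ℕ := (p.1 + 1, p.2 / 2)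

def FitsIn (l r : ℕ) (p : ℕ × ℕ) : Prop := l ≤ lo p ∧ hi p ≤ r

-- A block fitting in `[l, r)` has both coordinates below `r`: the range only makes the set finite.
open scoped Classical in
noncomputable def cover (l r : ℕ) : Finset (ℕ × ℕ) :=
  {p ∈ range (r + 1) ×ˢ range (r + 1) | FitsIn l r p ∧ ¬ FitsIn l r (parent p)}

lemma lo_lt_hi (p : ℕ × ℕ) : lo p < hi p :=
  Nat.mul_lt_mul_of_pos_right p.2.lt_succ_self (Nat.two_pow_pos _)

lemma lo_parent_le (p : ℕ × ℕ) : lo (parent p) ≤ lo p :=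
  calc lo (parent p) = p.2 / 2 * 2 * 2 ^ p.1 := by simp only [lo, parent]; ring
    _ ≤ lo p := Nat.mul_le_mul_right _ (Nat.div_mul_le_self _ _)

lemma hi_le_hi_parent (p : ℕ × ℕ) : hi p ≤ hi (parent p) :=
  calc hi p ≤ (p.2 / 2 + 1) * 2 * 2 ^ p.1 := Nat.mul_le_mul_right _ (by omega)
    _ = hi (parent p) := by simp only [hi, parent]; ring

lemma FitsIn.two_pow_fst_le {l r : ℕ} {p : ℕ × ℕ} (h : FitsIn l r p) : 2 ^ p.1 ≤ r :=
  (Nat.le_mul_of_pos_left _ p.2.succ_pos).trans h.2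

lemma FitsIn.fst_lt {l r : ℕ} {p : ℕ × ℕ} (h : FitsIn l r p) : p.1 < r :=
  Nat.lt_two_pow_self.trans_le h.two_pow_fst_le

lemma FitsIn.snd_lt {l r : ℕ} {p : ℕ × ℕ} (h : FitsIn l r p) : p.2 < r :=
  calc p.2 < p.2 + 1 := p.2.lt_succ_self
    _ ≤ hi p := Nat.le_mul_of_pos_right _ (Nat.two_pow_pos _)
    _ ≤ r := h.2

lemma mem_cover {l r : ℕ} {p : ℕ × ℕ} :
    p ∈ cover l r ↔ FitsIn l r p ∧ ¬ FitsIn l r (parent p) := by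
  simp only [cover, Finset.mem_filter, Finset.mem_product, Finset.mem_range,
    and_iff_right_iff_imp]
  exact fun h => ⟨by have := h.1.fst_lt; omega, by have := h.1.snd_lt; omega⟩

lemma mem_Ico_lo_hi {m e q : ℕ} : m ∈ Finset.Ico (lo (e, q)) (hi (e, q)) ↔ m / 2 ^ e = q := by
  rw [Finset.mem_Ico, Nat.div_eq_iff (Nat.two_pow_pos e)]
  dsimp only [lo, hi]
  rw [Nat.succ_mul]
  have := Nat.two_pow_pos e
  omega

lemma FitsIn.of_parent {l r : ℕ} {p : ℕ × ℕ} (h : FitsIn l r (parent p)) : FitsIn l r p :=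
  ⟨h.1.trans (lo_parent_le p), (hi_le_hi_parent p).trans h.2⟩

lemma parent_eq (e m : ℕ) : parent (e, m / 2 ^ e) = (e + 1, m / 2 ^ (e + 1)) := by
  rw [parent, Nat.div_div_eq_div_mul, ← pow_succ]

lemma fitsIn_of_le {l r m e e' : ℕ} (he : e' ≤ e) (h : FitsIn l r (e, m / 2 ^ e)) :
    FitsIn l r (e', m / 2 ^ e') := by
  induction e, he using Nat.le_induction with
  | base => exact h
  | succ e _ ih => exact ih (FitsIn.of_parent (parent_eq e m ▸ h))

open scoped Classical in
noncomputable def blockOf (l r m : ℕ) : ℕ × ℕ :=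
  (Nat.findGreatest (fun e => FitsIn l r (e, m / 2 ^ e)) r,
    m / 2 ^ Nat.findGreatest (fun e => FitsIn l r (e, m / 2 ^ e)) r)

lemma blockOf_mem_cover {l r m : ℕ} (hm : m ∈ Finset.Ico l r) : blockOf l r m ∈ cover l r := by
  classical
  rw [Finset.mem_Ico] at hm
  set e := Nat.findGreatest (fun e => FitsIn l r (e, m / 2 ^ e)) r
  have h0 : FitsIn l r (0, m / 2 ^ 0) := by
    simp only [FitsIn, lo, hi, pow_zero, Nat.div_one, Nat.mul_one]
    omega
  have hfit : FitsIn l r (e, m / 2 ^ e) :=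
    Nat.findGreatest_spec (P := fun e => FitsIn l r (e, m / 2 ^ e)) (Nat.zero_le r) h0
  refine mem_cover.2 ⟨hfit, fun h => ?_⟩
  rw [blockOf, parent_eq] at h
  by_cases he : e + 1 ≤ r
  · exact Nat.findGreatest_is_greatest e.lt_succ_self he h
  · exact he h.fst_lt.le

lemma blockOf_eq_iff {l r m : ℕ} {p : ℕ × ℕ} (hp : p ∈ cover l r) :
    blockOf l r m = p ↔ m ∈ Finset.Ico (lo p) (hi p) := by
  classical
  obtain ⟨e, q⟩ := p
  rw [mem_Ico_lo_hi]
  constructor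
  · intro h
    simp only [blockOf, Prod.mk.injEq] at h
    obtain ⟨rfl, rfl⟩ := h
    rfl
  · rintro rfl
    obtain ⟨hfit, hpar⟩ := mem_cover.1 hp
    rw [parent_eq] at hpar
    have : Nat.findGreatest (fun e => FitsIn l r (e, m / 2 ^ e)) r = e :=
      Nat.findGreatest_eq_iff.2 ⟨hfit.fst_lt.le, fun _ => hfit,
        fun n hn _ hfit' => hpar (fitsIn_of_le hn hfit')⟩
    rw [blockOf, this]

lemma sum_cover_sub {M : Type*} [AddCommGroup M] (F : ℕ → M) {l r : ℕ} (h : l ≤ r) :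
    ∑ p ∈ cover l r, (F (hi p) - F (lo p)) = F r - F l := by
  classical
  calc ∑ p ∈ cover l r, (F (hi p) - F (lo p))
      = ∑ p ∈ cover l r, ∑ m ∈ Finset.Ico l r with blockOf l r m = p, (F (m + 1) - F m) := by
        refine Finset.sum_congr rfl fun p hp => ?_
        have hfit := (mem_cover.1 hp).1
        have hfilter : {m ∈ Finset.Ico l r | blockOf l r m = p} = Finset.Ico (lo p) (hi p) := by
          ext m
          rw [Finset.mem_filter, blockOf_eq_iff hp, and_iff_right_iff_imp]
          exact fun hm => Finset.Ico_subset_Ico hfit.1 hfit.2 hm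
        rw [hfilter, Finset.sum_Ico_sub F (lo_lt_hi p).le]
    _ = ∑ m ∈ Finset.Ico l r, (F (m + 1) - F m) :=
        Finset.sum_fiberwise_of_maps_to (fun _ hm => blockOf_mem_cover hm) _
    _ = F r - F l := Finset.sum_Ico_sub F h

lemma fitsIn_parent_of_siblings {l r : ℕ} {p p' : ℕ × ℕ} (hp : FitsIn l r p) (hp' : FitsIn l r p')
    (h1 : p.1 = p'.1) (h2 : p.2 / 2 = p'.2 / 2) (hne : p.2 < p'.2) : FitsIn l r (parent p) := by
  obtain ⟨e, q⟩ := p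
  obtain ⟨e', q'⟩ := p'
  dsimp only at h1 h2 hne
  subst h1
  have hq : q = 2 * (q / 2) := by omega
  have hq' : q' = 2 * (q / 2) + 1 := by omega
  obtain ⟨hl, -⟩ := hp
  obtain ⟨-, hr⟩ := hp'
  simp only [FitsIn, lo, hi, parent] at hl hr ⊢
  rw [hq] at hl
  rw [hq'] at hr
  rw [pow_succ]
  constructor <;> linarith

/-- A maximal block's parent sticks out of `[l, r)` on the left or on the right, and two
maximal blocks of the same size cannot be siblings. -/
lemma card_cover_filter_fst_le_two (l r e : ℕ) : #{p ∈ cover l r | p.1 = e} ≤ 2 := by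
  classical
  refine (Finset.card_le_card_of_injOn (fun p => p.2 / 2)
    (t := {(l - 1) / 2 ^ (e + 1), (r - 1) / 2 ^ (e + 1)}) ?_ ?_).trans Finset.card_le_two
  · intro p hp
    simp only [Finset.mem_coe, Finset.mem_filter, mem_cover] at hp
    obtain ⟨⟨hfit, hpar⟩, rfl⟩ := hp
    have hlo_le := lo_parent_le p
    have hhi_le := hi_le_hi_parent p
    have hlo_hi := lo_lt_hi p
    have hlo : lo (parent p) = p.2 / 2 * 2 ^ (p.1 + 1) := rfl
    have hhi : hi (parent p) = (p.2 / 2 + 1) * 2 ^ (p.1 + 1) := rfl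
    simp only [FitsIn, not_and_or, not_le] at hfit hpar
    simp only [Finset.coe_insert, Finset.coe_singleton, Set.mem_insert_iff,
      Set.mem_singleton_iff]
    rcases hpar with h | h
    · exact .inl (Nat.div_eq_of_lt_le (by omega) (by omega)).symm
    · exact .inr (Nat.div_eq_of_lt_le (by omega) (by omega)).symm
  · intro p hp p' hp' h
    simp only [Finset.mem_coe, Finset.mem_filter, mem_cover] at hp hp'
    obtain ⟨⟨hfit, hpar⟩, he⟩ := hp
    obtain ⟨⟨hfit', hpar'⟩, he'⟩ := hp'
    have h1 : p.1 = p'.1 := he.trans he'.symm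
    by_contra hne
    have hne' : p.2 ≠ p'.2 := fun h2 => hne (Prod.ext h1 h2)
    rcases hne'.lt_or_gt with hlt | hlt
    · exact hpar (fitsIn_parent_of_siblings hfit hfit' h1 h hlt)
    · exact hpar' (fitsIn_parent_of_siblings hfit' hfit h1.symm h.symm hlt)

lemma card_cover_le {l r L : ℕ} (hr : r ≤ 2 ^ L) : #(cover l r) ≤ 2 * (L + 1) := by
  classical
  calc #(cover l r) = ∑ e ∈ range (L + 1), #{p ∈ cover l r | p.1 = e} := by
        refine Finset.card_eq_sum_card_fiberwise fun p hp => ?_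
        have := (mem_cover.1 hp).1.two_pow_fst_le.trans hr
        simp only [Finset.coe_range, Set.mem_Iio]
        exact Nat.lt_succ_of_le ((Nat.pow_le_pow_iff_right one_lt_two).1 this)
    _ ≤ ∑ _e ∈ range (L + 1), 2 := Finset.sum_le_sum fun e _ => card_cover_filter_fst_le_two l r e
    _ = 2 * (L + 1) := by rw [Finset.sum_const, Finset.card_range, smul_eq_mul, Nat.mul_comm]

lemma fst_le_of_mem_cover {l r L : ℕ} {p : ℕ × ℕ} (hp : p ∈ cover l r) (hr : r ≤ 2 ^ L) :
    p.1 ≤ L :=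
  (Nat.pow_le_pow_iff_right one_lt_two).1 ((mem_cover.1 hp).1.two_pow_fst_le.trans hr)

lemma snd_lt_of_mem_cover {l r L : ℕ} {p : ℕ × ℕ} (hp : p ∈ cover l r) (hr : r ≤ 2 ^ L) :
    p.2 < 2 ^ (L - p.1) := by
  have h : (p.2 + 1) * 2 ^ p.1 ≤ 2 ^ (L - p.1) * 2 ^ p.1 := by
    rw [← pow_add, Nat.sub_add_cancel (fst_le_of_mem_cover hp hr)]
    exact (mem_cover.1 hp).1.2.trans hr
  exact Nat.le_of_mul_le_mul_right h (Nat.two_pow_pos _)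

end DyadicBlock

/-- The rectangle `[s, t] × [u, v]`, encoded as `(s, t, u, v)` as in `IsRectPartition`. -/
def closedRect (q : ℝ × ℝ × ℝ × ℝ) : Set (ℝ × ℝ) := Icc q.1 q.2.1 ×ˢ Icc q.2.2.1 q.2.2.2

def openRect (q : ℝ × ℝ × ℝ × ℝ) : Set (ℝ × ℝ) := Ioo q.1 q.2.1 ×ˢ Ioo q.2.2.1 q.2.2.2

def rectIncrOf (f : ℝ → ℝ → ℝ) (q : ℝ × ℝ × ℝ × ℝ) : ℝ := rectIncr f q.1 q.2.1 q.2.2.1 q.2.2.2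

lemma isRectPartition_iff {a b c d : ℝ} {k : ℕ} {r : ℕ → ℝ × ℝ × ℝ × ℝ} :
    IsRectPartition a b c d k r ↔
      (∀ i < k, (r i).1 ≤ (r i).2.1 ∧ (r i).2.2.1 ≤ (r i).2.2.2) ∧
      ⋃ i ∈ range k, closedRect (r i) = closedRect (a, b, c, d) ∧
      ∀ i < k, ∀ j < k, i ≠ j → Disjoint (openRect (r i)) (openRect (r j)) :=
  Iff.rfl

lemma openRect_subset_openRect {q q' : ℝ × ℝ × ℝ × ℝ} (hq : q.1 ≤ q.2.1 ∧ q.2.2.1 ≤ q.2.2.2)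
    (h : closedRect q ⊆ closedRect q') : openRect q ⊆ openRect q' := by
  obtain ⟨hx, hy⟩ := hq
  rcases Set.prod_subset_prod_iff.1 h with ⟨h1, h2⟩ | h | h
  · obtain ⟨h1l, h1r⟩ := (Set.Icc_subset_Icc_iff hx).1 h1
    obtain ⟨h2l, h2r⟩ := (Set.Icc_subset_Icc_iff hy).1 h2
    exact Set.prod_mono (Set.Ioo_subset_Ioo h1l h1r) (Set.Ioo_subset_Ioo h2l h2r)
  · exact absurd h (Set.nonempty_Icc.2 hx).ne_empty
  · exact absurd h (Set.nonempty_Icc.2 hy).ne_empty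

lemma rectIncrOf_eq_zero_of_fst {f : ℝ → ℝ → ℝ} {q : ℝ × ℝ × ℝ × ℝ} (h : q.1 = q.2.1) :
    rectIncrOf f q = 0 := by
  simp only [rectIncrOf, rectIncr, h]; ring

lemma rectIncrOf_eq_zero_of_snd {f : ℝ → ℝ → ℝ} {q : ℝ × ℝ × ℝ × ℝ} (h : q.2.2.1 = q.2.2.2) :
    rectIncrOf f q = 0 := by
  simp only [rectIncrOf, rectIncr, h]; ring

lemma openRect_nonempty_of_rectIncrOf_ne_zero {f : ℝ → ℝ → ℝ} {q : ℝ × ℝ × ℝ × ℝ}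
    (hq : q.1 ≤ q.2.1 ∧ q.2.2.1 ≤ q.2.2.2) (h : rectIncrOf f q ≠ 0) : (openRect q).Nonempty :=
  Set.nonempty_Ioo.2 (hq.1.lt_of_ne fun he => h (rectIncrOf_eq_zero_of_fst he)) |>.prod <|
    Set.nonempty_Ioo.2 (hq.2.lt_of_ne fun he => h (rectIncrOf_eq_zero_of_snd he))

lemma IsRectPartition.closedRect_subset {a b c d : ℝ} {k : ℕ} {r : ℕ → ℝ × ℝ × ℝ × ℝ}
    (h : IsRectPartition a b c d k r) {i : ℕ} (hi : i < k) :
    closedRect (r i) ⊆ closedRect (a, b, c, d) := by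
  rw [← (isRectPartition_iff.1 h).2.1]
  exact Set.subset_biUnion_of_mem (u := fun i => closedRect (r i)) (Finset.mem_range.2 hi)

lemma isRectPartition_single {q : ℝ × ℝ × ℝ × ℝ} (hq : q.1 ≤ q.2.1 ∧ q.2.2.1 ≤ q.2.2.2) :
    IsRectPartition q.1 q.2.1 q.2.2.1 q.2.2.2 1 (fun _ => q) :=
  ⟨fun _ _ => hq, by simp, fun i hi j hj hij => absurd (by omega) hij⟩

lemma exists_isRectPartition {ι : Type*} [Nonempty ι] {a b c d : ℝ} (s : Finset ι)
    (q : ι → ℝ × ℝ × ℝ × ℝ) (hord : ∀ x ∈ s, (q x).1 ≤ (q x).2.1 ∧ (q x).2.2.1 ≤ (q x).2.2.2)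
    (hcov : ⋃ x ∈ s, closedRect (q x) = closedRect (a, b, c, d))
    (hdisj : (s : Set ι).Pairwise fun x y => Disjoint (openRect (q x)) (openRect (q y))) :
    ∃ k r, IsRectPartition a b c d k r ∧
      ∀ G : ℝ × ℝ × ℝ × ℝ → ℝ, ∑ t ∈ range k, G (r t) = ∑ x ∈ s, G (q x) := by
  obtain ⟨φ, hφ⟩ := s.exists_bijOn_range
  have hmem {t : ℕ} (ht : t < #s) : t ∈ (↑(Finset.range #s) : Set ℕ) := by simpa using ht
  refine ⟨#s, q ∘ φ, isRectPartition_iff.2 ⟨fun t ht => hord _ (hφ.mapsTo (hmem ht)), ?_,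
    fun t ht u hu htu => hdisj (hφ.mapsTo (hmem ht)) (hφ.mapsTo (hmem hu))
      fun h => htu (hφ.injOn (hmem ht) (hmem hu) h)⟩,
    fun G => Finset.sum_nbij φ (fun t ht => hφ.mapsTo ht) hφ.injOn hφ.surjOn fun _ _ => rfl⟩
  rw [← hcov, ← Finset.set_biUnion_coe, ← Finset.set_biUnion_coe s, ← hφ.image_eq,
    Set.biUnion_image]
  rfl

section Variation

variable {p : ℝ} {f : ℝ → ℝ → ℝ} {a b c d : ℝ}

noncomputable def gridSum (p : ℝ) (f : ℝ → ℝ → ℝ) (n m : ℕ) (τ σ : ℕ → ℝ) : ℝ :=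
  ∑ i ∈ range n, ∑ j ∈ range m, |rectIncr f (τ i) (τ (i + 1)) (σ j) (σ (j + 1))| ^ p

noncomputable def rectSum {ι : Type*} (p : ℝ) (f : ℝ → ℝ → ℝ) (s : Finset ι)
    (r : ι → ℝ × ℝ × ℝ × ℝ) : ℝ :=
  ∑ i ∈ s, |rectIncrOf f (r i)| ^ p

lemma gridSum_nonneg (p : ℝ) (f : ℝ → ℝ → ℝ) (n m : ℕ) (τ σ : ℕ → ℝ) :
    0 ≤ gridSum p f n m τ σ :=
  Finset.sum_nonneg fun _ _ => Finset.sum_nonneg fun _ _ => Real.rpow_nonneg (abs_nonneg _) _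

lemma rectSum_nonneg {ι : Type*} (p : ℝ) (f : ℝ → ℝ → ℝ) (s : Finset ι)
    (r : ι → ℝ × ℝ × ℝ × ℝ) : 0 ≤ rectSum p f s r :=
  Finset.sum_nonneg fun _ _ => Real.rpow_nonneg (abs_nonneg _) _

lemma pVar2d_rpow_eq (hp : 0 < p) : pVar2d p f a b c d ^ p =
    ⨆ (n : ℕ) (m : ℕ) (τ : ℕ → ℝ) (σ : ℕ → ℝ) (_ : IsPartitionOn a b n τ)
      (_ : IsPartitionOn c d m σ), ENNReal.ofReal (gridSum p f n m τ σ) := by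
  have h (n m : ℕ) (τ σ : ℕ → ℝ) : ENNReal.ofReal (gridSum p f n m τ σ ^ (1 / p)) ^ p =
      ENNReal.ofReal (gridSum p f n m τ σ) :=
    ENNReal.ofReal_rpow_one_div_rpow (gridSum_nonneg _ _ _ _ _ _) hp
  change (⨆ (n : ℕ) (m : ℕ) (τ : ℕ → ℝ) (σ : ℕ → ℝ) (_ : IsPartitionOn a b n τ)
    (_ : IsPartitionOn c d m σ), ENNReal.ofReal (gridSum p f n m τ σ ^ (1 / p))) ^ p = _
  simp only [ENNReal.iSup_rpow _ hp, h]

lemma cVar2d_rpow_eq (hp : 0 < p) : cVar2d p f a b c d ^ p =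
    ⨆ (k : ℕ) (r : ℕ → ℝ × ℝ × ℝ × ℝ) (_ : IsRectPartition a b c d k r),
      ENNReal.ofReal (rectSum p f (range k) r) := by
  have h (k : ℕ) (r : ℕ → ℝ × ℝ × ℝ × ℝ) :
      ENNReal.ofReal (rectSum p f (range k) r ^ (1 / p)) ^ p =
        ENNReal.ofReal (rectSum p f (range k) r) :=
    ENNReal.ofReal_rpow_one_div_rpow (rectSum_nonneg _ _ _ _) hp
  change (⨆ (k : ℕ) (r : ℕ → ℝ × ℝ × ℝ × ℝ) (_ : IsRectPartition a b c d k r),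
    ENNReal.ofReal (rectSum p f (range k) r ^ (1 / p))) ^ p = _
  simp only [ENNReal.iSup_rpow _ hp, h]

lemma le_pVar2d_rpow (hp : 0 < p) {n m : ℕ} {τ σ : ℕ → ℝ} (hτ : IsPartitionOn a b n τ)
    (hσ : IsPartitionOn c d m σ) :
    ENNReal.ofReal (gridSum p f n m τ σ) ≤ pVar2d p f a b c d ^ p := by
  rw [pVar2d_rpow_eq hp]
  exact le_iSup₂_of_le n m <| le_iSup₂_of_le τ σ <| le_iSup₂_of_le hτ hσ le_rfl

lemma le_cVar2d_rpow (hp : 0 < p) {k : ℕ} {r : ℕ → ℝ × ℝ × ℝ × ℝ}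
    (hr : IsRectPartition a b c d k r) :
    ENNReal.ofReal (rectSum p f (range k) r) ≤ cVar2d p f a b c d ^ p := by
  rw [cVar2d_rpow_eq hp]
  exact le_iSup₂_of_le k r <| le_iSup_of_le hr le_rfl

lemma cVar2d_rpow_le (hp : 0 < p) {z : ℝ≥0∞}
    (h : ∀ k r, IsRectPartition a b c d k r → ENNReal.ofReal (rectSum p f (range k) r) ≤ z) :
    cVar2d p f a b c d ^ p ≤ z := by
  rw [cVar2d_rpow_eq hp]
  exact iSup₂_le fun k r => iSup_le (h k r)

lemma exists_isRectPartition_of_grid {n m : ℕ} {τ σ : ℕ → ℝ} (hn : 0 < n) (hm : 0 < m)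
    (hτ : IsPartitionOn a b n τ) (hσ : IsPartitionOn c d m σ) :
    ∃ k r, IsRectPartition a b c d k r ∧ rectSum p f (range k) r = gridSum p f n m τ σ := by
  obtain ⟨hτm, rfl, rfl⟩ := hτ
  obtain ⟨hσm, rfl, rfl⟩ := hσ
  have hcov : ⋃ x ∈ range n ×ˢ range m, closedRect (τ x.1, τ (x.1 + 1), σ x.2, σ (x.2 + 1)) =
      closedRect (τ 0, τ n, σ 0, σ m) :=
    calc _ = (⋃ i ∈ range n, Icc (τ i) (τ (i + 1))) ×ˢ ⋃ j ∈ range m, Icc (σ j) (σ (j + 1)) := by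
          simpa only [closedRect, ← Finset.set_biUnion_coe, Finset.coe_product] using
            Set.biUnion_prod (↑(Finset.range n) : Set ℕ) ↑(Finset.range m)
              (fun i => Icc (τ i) (τ (i + 1)))
              (fun j => Icc (σ j) (σ (j + 1)))
      _ = closedRect (τ 0, τ n, σ 0, σ m) := by
          rw [hτm.biUnion_range_Icc hn, hσm.biUnion_range_Icc hm]; rfl
  have hdisj : ((range n ×ˢ range m : Finset (ℕ × ℕ)) : Set (ℕ × ℕ)).Pairwise fun x y =>
      Disjoint (openRect (τ x.1, τ (x.1 + 1), σ x.2, σ (x.2 + 1)))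
        (openRect (τ y.1, τ (y.1 + 1), σ y.2, σ (y.2 + 1))) := by
    intro x _ y _ hxy
    refine Set.disjoint_prod.2 ?_
    by_cases h : x.1 = y.1
    · exact .inr (hσm.pairwise_disjoint_on_Ioo_succ fun h' => hxy (Prod.ext h h'))
    · exact .inl (hτm.pairwise_disjoint_on_Ioo_succ h)
  obtain ⟨k, r, hr, hsum⟩ := exists_isRectPartition (range n ×ˢ range m) _
    (fun x _ => ⟨hτm x.1.le_succ, hσm x.2.le_succ⟩) hcov hdisj
  exact ⟨k, r, hr, (hsum fun q => |rectIncrOf f q| ^ p).trans (Finset.sum_product _ _ _)⟩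

lemma pVar2d_le_cVar2d (hp : 0 < p) : pVar2d p f a b c d ≤ cVar2d p f a b c d := by
  rw [← ENNReal.rpow_le_rpow_iff hp, pVar2d_rpow_eq hp]
  refine iSup₂_le fun n m => iSup₂_le fun τ σ => iSup₂_le fun hτ hσ => ?_
  rcases n.eq_zero_or_pos with rfl | hn
  · simp [gridSum]
  rcases m.eq_zero_or_pos with rfl | hm
  · simp [gridSum]
  obtain ⟨k, r, hr, hsum⟩ := exists_isRectPartition_of_grid (p := p) (f := f) hn hm hτ hσ
  exact hsum ▸ le_cVar2d_rpow hp hr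

noncomputable def extendPartition (a' b' : ℝ) (n : ℕ) (τ : ℕ → ℝ) (j : ℕ) : ℝ :=
  if j = 0 then a' else if j ≤ n + 1 then τ (j - 1) else b'

lemma IsPartitionOn.extend {n : ℕ} {τ : ℕ → ℝ} (hτ : IsPartitionOn a b n τ) {a' b' : ℝ}
    (ha : a' ≤ a) (hb : b ≤ b') : IsPartitionOn a' b' (n + 2) (extendPartition a' b' n τ) := by
  obtain ⟨hmono, rfl, rfl⟩ := hτ
  refine ⟨fun j j' h => ?_, by simp [extendPartition], by simp [extendPartition]⟩
  unfold extendPartition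
  split_ifs <;> first
    | exact le_rfl
    | (exfalso; omega)
    | exact hmono (by omega)
    | exact ha.trans (hmono (Nat.zero_le _))
    | exact (hmono (by omega : j - 1 ≤ n)).trans hb
    | exact ha.trans ((hmono (Nat.zero_le n)).trans hb)

lemma extendPartition_add_one {a' b' : ℝ} {n i : ℕ} (τ : ℕ → ℝ) (hi : i ≤ n) :
    extendPartition a' b' n τ (i + 1) = τ i := by
  simp [extendPartition, show i ≤ n by omega]

lemma gridSum_le_gridSum_extend {a' b' c' d' : ℝ} (n m : ℕ) (τ σ : ℕ → ℝ) :
    gridSum p f n m τ σ ≤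
      gridSum p f (n + 2) (m + 2) (extendPartition a' b' n τ) (extendPartition c' d' m σ) := by
  set τ' := extendPartition a' b' n τ
  set σ' := extendPartition c' d' m σ
  have hG : ∀ i j, 0 ≤ |rectIncr f (τ' i) (τ' (i + 1)) (σ' j) (σ' (j + 1))| ^ p :=
    fun _ _ => Real.rpow_nonneg (abs_nonneg _) _
  calc gridSum p f n m τ σ
      = ∑ i ∈ range n, ∑ j ∈ range m,
          |rectIncr f (τ' (i + 1)) (τ' (i + 1 + 1)) (σ' (j + 1)) (σ' (j + 1 + 1))| ^ p := by
        refine Finset.sum_congr rfl fun i hi => Finset.sum_congr rfl fun j hj => ?_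
        rw [Finset.mem_range] at hi hj
        simp only [τ', σ', extendPartition_add_one τ (by omega : i ≤ n),
          extendPartition_add_one τ (by omega : i + 1 ≤ n),
          extendPartition_add_one σ (by omega : j ≤ m),
          extendPartition_add_one σ (by omega : j + 1 ≤ m)]
    _ ≤ ∑ i ∈ range n, ∑ j ∈ range (m + 2),
          |rectIncr f (τ' (i + 1)) (τ' (i + 1 + 1)) (σ' j) (σ' (j + 1))| ^ p :=
        Finset.sum_le_sum fun i _ => sum_range_le_sum_range_add_two (hG _) m
    _ ≤ gridSum p f (n + 2) (m + 2) τ' σ' :=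
        sum_range_le_sum_range_add_two (fun i => Finset.sum_nonneg fun j _ => hG i j) n

lemma pVar2d_mono (hp : 0 < p) {a' b' c' d' : ℝ} (ha : a' ≤ a) (hb : b ≤ b') (hc : c' ≤ c)
    (hd : d ≤ d') : pVar2d p f a b c d ≤ pVar2d p f a' b' c' d' := by
  rw [← ENNReal.rpow_le_rpow_iff hp, pVar2d_rpow_eq hp]
  refine iSup₂_le fun n m => iSup₂_le fun τ σ => iSup₂_le fun hτ hσ => ?_
  exact (ENNReal.ofReal_le_ofReal (gridSum_le_gridSum_extend n m τ σ)).trans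
    (le_pVar2d_rpow hp (hτ.extend ha hb) (hσ.extend hc hd))

lemma IsRectPartition.exists_refinement {k : ℕ} {r : ℕ → ℝ × ℝ × ℝ × ℝ}
    (h : IsRectPartition a b c d k r) (ks : ℕ → ℕ) (rs : ℕ → ℕ → ℝ × ℝ × ℝ × ℝ)
    (hsub : ∀ i < k, IsRectPartition (r i).1 (r i).2.1 (r i).2.2.1 (r i).2.2.2 (ks i) (rs i)) :
    ∃ K R, IsRectPartition a b c d K R ∧ ∀ G : ℝ × ℝ × ℝ × ℝ → ℝ,
      ∑ t ∈ range K, G (R t) = ∑ i ∈ range k, ∑ t ∈ range (ks i), G (rs i t) := by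
  have hord : ∀ x ∈ (range k).sigma (fun i => range (ks i)),
      (rs x.1 x.2).1 ≤ (rs x.1 x.2).2.1 ∧ (rs x.1 x.2).2.2.1 ≤ (rs x.1 x.2).2.2.2 := by
    rintro ⟨i, t⟩ hx
    simp only [Finset.mem_sigma, Finset.mem_range] at hx
    exact (hsub i hx.1).1 t hx.2
  have hcov : ⋃ x ∈ (range k).sigma (fun i => range (ks i)), closedRect (rs x.1 x.2) =
      closedRect (a, b, c, d) :=
    calc _ = ⋃ i ∈ range k, ⋃ t ∈ range (ks i), closedRect (rs i t) := by
          ext z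
          simp only [Set.mem_iUnion, Finset.mem_sigma, exists_prop, Sigma.exists, and_assoc,
            exists_and_left]
      _ = ⋃ i ∈ range k, closedRect (r i) :=
          Set.iUnion₂_congr fun i hi => (hsub i (Finset.mem_range.1 hi)).2.1
      _ = closedRect (a, b, c, d) := h.2.1
  have hdisj : ((range k).sigma (fun i => range (ks i)) : Set ((_ : ℕ) × ℕ)).Pairwise
      fun x y => Disjoint (openRect (rs x.1 x.2)) (openRect (rs y.1 y.2)) := by
    rintro ⟨i, t⟩ hx ⟨j, u⟩ hy hne
    simp only [Finset.coe_sigma, Set.mem_sigma_iff, Finset.coe_range, Set.mem_Iio] at hx hy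
    by_cases hij : i = j
    · subst hij
      exact (hsub i hx.1).2.2 t hx.2 u hy.2 fun htu => hne (by rw [htu])
    · exact (h.2.2 i hx.1 j hy.1 hij).mono
        (openRect_subset_openRect ((hsub i hx.1).1 t hx.2) ((hsub i hx.1).closedRect_subset hx.2))
        (openRect_subset_openRect ((hsub j hy.1).1 u hy.2) ((hsub j hy.1).closedRect_subset hy.2))
  obtain ⟨K, R, hR, hsum⟩ := exists_isRectPartition _ _ hord hcov hdisj
  exact ⟨K, R, hR, fun G => (hsum G).trans (Finset.sum_sigma _ _ _)⟩

lemma sum_cVar2d_rpow_le (hp : 0 < p) {k : ℕ} {r : ℕ → ℝ × ℝ × ℝ × ℝ}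
    (h : IsRectPartition a b c d k r) :
    ∑ i ∈ range k, cVar2d p f (r i).1 (r i).2.1 (r i).2.2.1 (r i).2.2.2 ^ p ≤
      cVar2d p f a b c d ^ p := by
  have hprod (i : ℕ) : cVar2d p f (r i).1 (r i).2.1 (r i).2.2.1 (r i).2.2.2 ^ p =
      ⨆ y : ℕ × (ℕ → ℝ × ℝ × ℝ × ℝ),
        ⨆ (_ : IsRectPartition (r i).1 (r i).2.1 (r i).2.2.1 (r i).2.2.2 y.1 y.2),
          ENNReal.ofReal (rectSum p f (range y.1) y.2) := by
    rw [cVar2d_rpow_eq hp, iSup_prod]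
  rw [Finset.sum_congr rfl fun i _ => hprod i]
  refine ENNReal.sum_iSup_le fun x => ?_
  have hchoice : ∀ i < k, ∃ y : ℕ × (ℕ → ℝ × ℝ × ℝ × ℝ),
      IsRectPartition (r i).1 (r i).2.1 (r i).2.2.1 (r i).2.2.2 y.1 y.2 ∧
      (⨆ (_ : IsRectPartition (r i).1 (r i).2.1 (r i).2.2.1 (r i).2.2.2 (x i).1 (x i).2),
        ENNReal.ofReal (rectSum p f (range (x i).1) (x i).2)) ≤
          ENNReal.ofReal (rectSum p f (range y.1) y.2) := by
    intro i hi
    by_cases hx : IsRectPartition (r i).1 (r i).2.1 (r i).2.2.1 (r i).2.2.2 (x i).1 (x i).2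
    · exact ⟨x i, hx, iSup_le fun _ => le_rfl⟩
    · exact ⟨(1, fun _ => r i), isRectPartition_single (h.1 i hi), by simp [hx]⟩
  choose! y hy hle using hchoice
  obtain ⟨K, R, hR, hsum⟩ := h.exists_refinement (fun i => (y i).1) (fun i => (y i).2) hy
  calc _ ≤ ∑ i ∈ range k, ENNReal.ofReal (rectSum p f (range (y i).1) (y i).2) :=
        Finset.sum_le_sum fun i hi => hle i (Finset.mem_range.1 hi)
    _ = ENNReal.ofReal (rectSum p f (range K) R) := by
        rw [← ENNReal.ofReal_sum_of_nonneg fun i _ => rectSum_nonneg _ _ _ _, rectSum,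
          hsum fun q => |rectIncrOf f q| ^ p]
        rfl
    _ ≤ cVar2d p f a b c d ^ p := le_cVar2d_rpow hp hR

end Variation

open DyadicBlock

section Counting

variable {ρ : ℝ} {f : ℝ → ℝ → ℝ} {a b c d : ℝ}

def gridRect (x y : ℕ → ℝ) (I : (ℕ × ℕ) × (ℕ × ℕ)) : ℝ × ℝ × ℝ × ℝ :=
  (x I.1.1, x I.1.2, y I.2.1, y I.2.2)

def dyadicCell (x y : ℕ → ℝ) (P : (ℕ × ℕ) × (ℕ × ℕ)) : ℝ × ℝ × ℝ × ℝ :=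
  gridRect x y ((lo P.1, hi P.1), (lo P.2, hi P.2))

lemma rectIncrOf_gridRect_eq_sum_dyadicCell (x y : ℕ → ℝ) {l r l' r' : ℕ} (h : l ≤ r)
    (h' : l' ≤ r') :
    rectIncrOf f (gridRect x y ((l, r), (l', r'))) =
      ∑ P ∈ cover l r ×ˢ cover l' r', rectIncrOf f (dyadicCell x y P) := by
  have hsnd (s t : ℝ) : ∑ p' ∈ cover l' r', rectIncr f s t (y (lo p')) (y (hi p')) =
      rectIncr f s t (y l') (y r') :=
    calc _ = ∑ p' ∈ cover l' r',
          ((f t (y (hi p')) - f s (y (hi p'))) - (f t (y (lo p')) - f s (y (lo p')))) :=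
          Finset.sum_congr rfl fun _ _ => by unfold rectIncr; ring
      _ = _ := by rw [sum_cover_sub (fun j => f t (y j) - f s (y j)) h']; unfold rectIncr; ring
  have hfst (u v : ℝ) : ∑ p ∈ cover l r, rectIncr f (x (lo p)) (x (hi p)) u v =
      rectIncr f (x l) (x r) u v :=
    calc _ = ∑ p ∈ cover l r,
          ((f (x (hi p)) v - f (x (hi p)) u) - (f (x (lo p)) v - f (x (lo p)) u)) :=
          Finset.sum_congr rfl fun _ _ => by unfold rectIncr; ring
      _ = _ := by rw [sum_cover_sub (fun i => f (x i) v - f (x i) u) h]; unfold rectIncr; ring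
  simp only [Finset.sum_product, dyadicCell, gridRect, rectIncrOf, hsnd, hfst]

lemma exists_dyadicCell_abs_rectIncrOf_ge {x y : ℕ → ℝ} {L l r l' r' : ℕ} {v : ℝ} (hv : 0 < v)
    (h : l ≤ r) (hr : r ≤ 2 ^ L) (h' : l' ≤ r') (hr' : r' ≤ 2 ^ L)
    (hlarge : v ≤ |rectIncrOf f (gridRect x y ((l, r), (l', r')))|) :
    ∃ P ∈ cover l r ×ˢ cover l' r',
      v / (4 * ((L : ℝ) + 1) ^ 2) ≤ |rectIncrOf f (dyadicCell x y P)| := by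
  set D := cover l r ×ˢ cover l' r'
  have hsum : v ≤ ∑ P ∈ D, |rectIncrOf f (dyadicCell x y P)| :=
    hlarge.trans ((rectIncrOf_gridRect_eq_sum_dyadicCell x y h h').symm ▸
      Finset.abs_sum_le_sum_abs _ _)
  have hD : D.Nonempty := by
    rw [Finset.nonempty_iff_ne_empty]
    rintro hD
    rw [hD, Finset.sum_empty] at hsum
    linarith
  have hcard : (#D : ℝ) ≤ 4 * ((L : ℝ) + 1) ^ 2 := by
    have := Nat.mul_le_mul (card_cover_le (l := l) hr) (card_cover_le (l := l') hr')
    rw [Finset.card_product]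
    exact_mod_cast this.trans_eq (by ring)
  obtain ⟨P, hP, hle⟩ := Finset.exists_le_of_sum_le hD (f := fun _ => v / #D)
    (g := fun P => |rectIncrOf f (dyadicCell x y P)|)
    (by rw [Finset.sum_const, nsmul_eq_mul, mul_div_cancel₀ _ (by positivity)]; exact hsum)
  exact ⟨P, hP, (div_le_div_of_nonneg_left hv.le (by positivity) hcard).trans hle⟩

lemma sum_le_gridSum {ι : Type*} {S : Finset ι} {n m : ℕ} {τ σ : ℕ → ℝ} {g : ι → ℕ × ℕ}
    (hg : Set.InjOn g S) (hgS : ∀ i ∈ S, (g i).1 < n ∧ (g i).2 < m) :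
    ∑ i ∈ S, |rectIncr f (τ (g i).1) (τ ((g i).1 + 1)) (σ (g i).2) (σ ((g i).2 + 1))| ^ ρ ≤
      gridSum ρ f n m τ σ := by
  classical
  set F : ℕ × ℕ → ℝ := fun P => |rectIncr f (τ P.1) (τ (P.1 + 1)) (σ P.2) (σ (P.2 + 1))| ^ ρ
  calc ∑ i ∈ S, F (g i) = ∑ P ∈ S.image g, F P := (Finset.sum_image hg).symm
    _ ≤ ∑ P ∈ range n ×ˢ range m, F P := by
        refine Finset.sum_le_sum_of_subset_of_nonneg (fun P hP => ?_)
          fun _ _ _ => Real.rpow_nonneg (abs_nonneg _) _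
        obtain ⟨i, hi, rfl⟩ := Finset.mem_image.1 hP
        exact Finset.mem_product.2
          ⟨Finset.mem_range.2 (hgS i hi).1, Finset.mem_range.2 (hgS i hi).2⟩
    _ = gridSum ρ f n m τ σ := Finset.sum_product _ _ _

lemma IsPartitionOn.coarsen {L e : ℕ} {x : ℕ → ℝ} (hx : IsPartitionOn a b (2 ^ L) x)
    (he : e ≤ L) : IsPartitionOn a b (2 ^ (L - e)) (fun j => x (j * 2 ^ e)) :=
  ⟨fun _ _ h => hx.1 (Nat.mul_le_mul_right _ h), by simpa using hx.2.1,
    show x (2 ^ (L - e) * 2 ^ e) = b by rw [← pow_add, Nat.sub_add_cancel he]; exact hx.2.2⟩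

/-- `(L + 1) ^ 2` counts the shapes of dyadic cells and `4 (L + 1) ^ 2` bounds the number of
maximal dyadic cells in one grid rectangle. -/
noncomputable def countingConst (ρ : ℝ) (L : ℕ) : ℝ :=
  ((L : ℝ) + 1) ^ 2 * (4 * ((L : ℝ) + 1) ^ 2) ^ ρ

lemma countingConst_pos (ρ : ℝ) (L : ℕ) : 0 < countingConst ρ L := by
  unfold countingConst
  positivity

lemma openRect_dyadicCell_subset {x y : ℕ → ℝ} (hx : Monotone x) (hy : Monotone y)
    {l r l' r' : ℕ} {P : (ℕ × ℕ) × (ℕ × ℕ)} (hP : P ∈ cover l r ×ˢ cover l' r') :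
    openRect (dyadicCell x y P) ⊆ openRect (gridRect x y ((l, r), (l', r'))) := by
  obtain ⟨h1, h2⟩ := Finset.mem_product.1 hP
  obtain ⟨⟨hl, hr⟩, -⟩ := mem_cover.1 h1
  obtain ⟨⟨hl', hr'⟩, -⟩ := mem_cover.1 h2
  exact Set.prod_mono (Set.Ioo_subset_Ioo (hx hl) (hx hr)) (Set.Ioo_subset_Ioo (hy hl') (hy hr'))

/-- Dyadic cells of one shape `e` inside pairwise disjoint rectangles are distinct cells of the
grid with `2 ^ (L - e.1) × 2 ^ (L - e.2)` cells. -/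
lemma card_mul_rpow_le_gridSum {ι : Type*} (hρ : 0 < ρ) {B : ℝ} (hB : 0 < B) {L : ℕ}
    {x y : ℕ → ℝ} (hx : Monotone x) (hy : Monotone y) {S : Finset ι}
    {I P : ι → (ℕ × ℕ) × (ℕ × ℕ)} (hIL : ∀ i ∈ S, (I i).1.2 ≤ 2 ^ L ∧ (I i).2.2 ≤ 2 ^ L)
    (hdisj : (S : Set ι).Pairwise fun i j =>
      Disjoint (openRect (gridRect x y (I i))) (openRect (gridRect x y (I j))))
    (hP : ∀ i ∈ S, P i ∈ cover (I i).1.1 (I i).1.2 ×ˢ cover (I i).2.1 (I i).2.2)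
    {e : ℕ × ℕ} (he : ∀ i ∈ S, (P i).1.1 = e.1 ∧ (P i).2.1 = e.2)
    (hPB : ∀ i ∈ S, B ≤ |rectIncrOf f (dyadicCell x y (P i))|) :
    (#S : ℝ) * B ^ ρ ≤ gridSum ρ f (2 ^ (L - e.1)) (2 ^ (L - e.2))
      (fun j => x (j * 2 ^ e.1)) (fun j => y (j * 2 ^ e.2)) := by
  set τ : ℕ → ℝ := fun j => x (j * 2 ^ e.1)
  set σ : ℕ → ℝ := fun j => y (j * 2 ^ e.2)
  have hcell : ∀ i ∈ S,
      dyadicCell x y (P i) = (τ (P i).1.2, τ ((P i).1.2 + 1), σ (P i).2.2, σ ((P i).2.2 + 1)) := by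
    intro i him
    simp only [dyadicCell, gridRect, lo, hi, τ, σ, (he i him).1, (he i him).2]
  have hinj : Set.InjOn (fun i => ((P i).1.2, (P i).2.2)) S := by
    intro i him j hjm hij
    by_contra hne
    have hcell_eq : dyadicCell x y (P i) = dyadicCell x y (P j) := by
      simp only [Prod.mk.injEq] at hij
      rw [hcell i him, hcell j hjm, hij.1, hij.2]
    obtain ⟨z, hz⟩ := openRect_nonempty_of_rectIncrOf_ne_zero (f := f) (q := dyadicCell x y (P i))
      ⟨hx (lo_lt_hi _).le, hy (lo_lt_hi _).le⟩ (abs_pos.1 (hB.trans_le (hPB i him)))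
    exact Set.disjoint_left.1 (hdisj him hjm hne) (openRect_dyadicCell_subset hx hy (hP i him) hz)
      (openRect_dyadicCell_subset hx hy (hP j hjm) (hcell_eq ▸ hz))
  have hrange : ∀ i ∈ S, (P i).1.2 < 2 ^ (L - e.1) ∧ (P i).2.2 < 2 ^ (L - e.2) := by
    intro i him
    obtain ⟨hP1, hP2⟩ := Finset.mem_product.1 (hP i him)
    exact ⟨(he i him).1 ▸ snd_lt_of_mem_cover hP1 (hIL i him).1,
      (he i him).2 ▸ snd_lt_of_mem_cover hP2 (hIL i him).2⟩
  calc (#S : ℝ) * B ^ ρ = ∑ i ∈ S, B ^ ρ := by rw [Finset.sum_const, nsmul_eq_mul]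
    _ ≤ ∑ i ∈ S,
        |rectIncr f (τ (P i).1.2) (τ ((P i).1.2 + 1)) (σ (P i).2.2) (σ ((P i).2.2 + 1))| ^ ρ :=
      Finset.sum_le_sum fun i him => Real.rpow_le_rpow hB.le
        (by have := hPB i him; rwa [hcell i him] at this) hρ.le
    _ ≤ _ := sum_le_gridSum (g := fun i => ((P i).1.2, (P i).2.2)) hinj hrange

lemma card_mul_rpow_le_of_grid {ι : Type*} (hρ : 0 < ρ) {v : ℝ} (hv : 0 < v) {L : ℕ}
    {x y : ℕ → ℝ} (hx : IsPartitionOn a b (2 ^ L) x) (hy : IsPartitionOn c d (2 ^ L) y)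
    (S : Finset ι) (I : ι → (ℕ × ℕ) × (ℕ × ℕ))
    (hI : ∀ i ∈ S, (I i).1.1 ≤ (I i).1.2 ∧ (I i).1.2 ≤ 2 ^ L ∧
      (I i).2.1 ≤ (I i).2.2 ∧ (I i).2.2 ≤ 2 ^ L)
    (hdisj : (S : Set ι).Pairwise fun i j =>
      Disjoint (openRect (gridRect x y (I i))) (openRect (gridRect x y (I j))))
    (hlarge : ∀ i ∈ S, v ≤ |rectIncrOf f (gridRect x y (I i))|) :
    ENNReal.ofReal (#S * v ^ ρ) ≤ ENNReal.ofReal (countingConst ρ L) * pVar2d ρ f a b c d ^ ρ := by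
  classical
  set B := v / (4 * ((L : ℝ) + 1) ^ 2) with hB
  have hBpos : 0 < B := by positivity
  have hcell : ∀ i ∈ S, ∃ P ∈ cover (I i).1.1 (I i).1.2 ×ˢ cover (I i).2.1 (I i).2.2,
      B ≤ |rectIncrOf f (dyadicCell x y P)| := fun i him =>
    exists_dyadicCell_abs_rectIncrOf_ge hv (hI i him).1 (hI i him).2.1 (hI i him).2.2.1
      (hI i him).2.2.2 (hlarge i him)
  choose! P hP hPB using hcell
  have hlev : ∀ i ∈ S, (P i).1.1 ≤ L ∧ (P i).2.1 ≤ L := fun i him =>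
    ⟨fst_le_of_mem_cover (Finset.mem_product.1 (hP i him)).1 (hI i him).2.1,
      fst_le_of_mem_cover (Finset.mem_product.1 (hP i him)).2 (hI i him).2.2.2⟩
  obtain ⟨e, he, hcard⟩ := Finset.exists_le_card_fiber_of_nsmul_le_card_of_maps_to
    (t := range (L + 1) ×ˢ range (L + 1)) (f := fun i => ((P i).1.1, (P i).2.1))
    (b := (#S : ℝ) / ((L : ℝ) + 1) ^ 2)
    (fun i him => by simpa [Nat.lt_succ_iff] using hlev i him) ⟨(0, 0), by simp⟩
    (by rw [Finset.card_product, Finset.card_range, nsmul_eq_mul]; push_cast; field_simp; rfl)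
  have heL : e.1 ≤ L ∧ e.2 ≤ L := by simpa [Nat.lt_succ_iff] using he
  set S' := {i ∈ S | ((P i).1.1, (P i).2.1) = e}
  have hS' : ∀ i ∈ S', i ∈ S := fun i him => (Finset.mem_filter.1 him).1
  have hgrid := card_mul_rpow_le_gridSum (f := f) hρ hBpos hx.1 hy.1 (S := S') (L := L)
    (fun i him => ⟨(hI i (hS' i him)).2.1, (hI i (hS' i him)).2.2.2⟩)
    (hdisj.mono (Finset.coe_subset.2 (Finset.filter_subset _ _))) (fun i him => hP i (hS' i him))
    (fun i him => by simpa [Prod.ext_iff] using (Finset.mem_filter.1 him).2)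
    (fun i him => hPB i (hS' i him))
  have hvB : v ^ ρ = (4 * ((L : ℝ) + 1) ^ 2) ^ ρ * B ^ ρ := by
    rw [← Real.mul_rpow (by positivity) hBpos.le, hB, mul_div_cancel₀ _ (by positivity)]
  have hSS' : (#S : ℝ) ≤ ((L : ℝ) + 1) ^ 2 * #S' := by
    rwa [div_le_iff₀ (by positivity), _root_.mul_comm] at hcard
  have hC := (countingConst_pos ρ L).le
  calc ENNReal.ofReal (#S * v ^ ρ)
      ≤ ENNReal.ofReal (countingConst ρ L * (#S' * B ^ ρ)) := by
        refine ENNReal.ofReal_le_ofReal ?_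
        calc (#S : ℝ) * v ^ ρ ≤ ((L : ℝ) + 1) ^ 2 * #S' * v ^ ρ := by gcongr
          _ = _ := by rw [hvB, countingConst]; ring
    _ ≤ ENNReal.ofReal (countingConst ρ L) *
          ENNReal.ofReal (gridSum ρ f (2 ^ (L - e.1)) (2 ^ (L - e.2))
            (fun j => x (j * 2 ^ e.1)) (fun j => y (j * 2 ^ e.2))) := by
        rw [← ENNReal.ofReal_mul hC]
        exact ENNReal.ofReal_le_ofReal (mul_le_mul_of_nonneg_left hgrid hC)
    _ ≤ _ := by gcongr; exact le_pVar2d_rpow hρ (hx.coarsen heL.1) (hy.coarsen heL.2)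

lemma card_corners_le {ι : Type*} [DecidableEq ι] (S : Finset ι) (a : ℝ) (u w : ι → ℝ) :
    #(insert a (S.biUnion fun i => {u i, w i})) ≤ 2 ^ (Nat.log 2 #S + 2) := by
  refine (Finset.card_insert_le _ _).trans ((Nat.add_le_add_right ?_ 1).trans
    (two_mul_add_one_le_two_pow_log_add_two #S))
  calc #(S.biUnion fun i => {u i, w i}) ≤ ∑ i ∈ S, #({u i, w i} : Finset ℝ) :=
        Finset.card_biUnion_le
    _ ≤ ∑ _i ∈ S, 2 := Finset.sum_le_sum fun _ _ => Finset.card_le_two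
    _ = 2 * #S := by rw [Finset.sum_const, smul_eq_mul, Nat.mul_comm]

lemma exists_partition_through_endpoints {ι : Type*} {a b : ℝ} (hab : a ≤ b) (S : Finset ι)
    (u w : ι → ℝ) (huw : ∀ i ∈ S, a ≤ u i ∧ u i < w i ∧ w i ≤ b) :
    ∃ x : ℕ → ℝ, IsPartitionOn a b (2 ^ (Nat.log 2 #S + 2)) x ∧
      ∀ i ∈ S, ∃ l r, l < r ∧ r ≤ 2 ^ (Nat.log 2 #S + 2) ∧ x l = u i ∧ x r = w i := by
  classical
  set T := insert a (S.biUnion fun i => {u i, w i})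
  have hT : ∀ t ∈ T, a ≤ t ∧ t ≤ b := by
    intro t ht
    rcases Finset.mem_insert.1 ht with rfl | ht
    · exact ⟨le_rfl, hab⟩
    obtain ⟨i, hi, ht⟩ := Finset.mem_biUnion.1 ht
    obtain ⟨h1, h2, h3⟩ := huw i hi
    rcases Finset.mem_insert.1 ht with rfl | ht
    · exact ⟨h1, h2.le.trans h3⟩
    · rw [Finset.mem_singleton.1 ht]
      exact ⟨h1.trans h2.le, h3⟩
  obtain ⟨x, hxm, hx0, hxb, hxT⟩ := T.exists_monotone_enum (Finset.mem_insert_self _ _) hT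
  have hTL : #T ≤ 2 ^ (Nat.log 2 #S + 2) := card_corners_le S a u w
  refine ⟨x, ⟨hxm, hx0, hxb _ hTL⟩, fun i hi => ?_⟩
  obtain ⟨l, -, hl⟩ := hxT (u i) (Finset.mem_insert_of_mem (Finset.mem_biUnion.2 ⟨i, hi, by simp⟩))
  obtain ⟨r, hr, hrw⟩ :=
    hxT (w i) (Finset.mem_insert_of_mem (Finset.mem_biUnion.2 ⟨i, hi, by simp⟩))
  exact ⟨l, r, hxm.reflect_lt (by rw [hl, hrw]; exact (huw i hi).2.1), by omega, hl, hrw⟩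

lemma card_mul_rpow_le {ι : Type*} (hρ : 0 < ρ) {v : ℝ} (hv : 0 < v) (S : Finset ι)
    (r : ι → ℝ × ℝ × ℝ × ℝ) (hord : ∀ i ∈ S, (r i).1 ≤ (r i).2.1 ∧ (r i).2.2.1 ≤ (r i).2.2.2)
    (hsub : ∀ i ∈ S, closedRect (r i) ⊆ closedRect (a, b, c, d))
    (hdisj : (S : Set ι).Pairwise fun i j => Disjoint (openRect (r i)) (openRect (r j)))
    (hlarge : ∀ i ∈ S, v ≤ |rectIncrOf f (r i)|) :
    ENNReal.ofReal (#S * v ^ ρ) ≤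
      ENNReal.ofReal (countingConst ρ (Nat.log 2 #S + 2)) * pVar2d ρ f a b c d ^ ρ := by
  rcases S.eq_empty_or_nonempty with rfl | ⟨i₀, hi₀⟩
  · simp
  have hcoord : ∀ i ∈ S, (a ≤ (r i).1 ∧ (r i).1 < (r i).2.1 ∧ (r i).2.1 ≤ b) ∧
      (c ≤ (r i).2.2.1 ∧ (r i).2.2.1 < (r i).2.2.2 ∧ (r i).2.2.2 ≤ d) := by
    intro i hi
    have hne : rectIncrOf f (r i) ≠ 0 := abs_pos.1 (hv.trans_le (hlarge i hi))
    obtain ⟨hx, hy⟩ := hord i hi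
    have h1 := hsub i hi (show ((r i).1, (r i).2.2.1) ∈ closedRect (r i) from
      ⟨Set.left_mem_Icc.2 hx, Set.left_mem_Icc.2 hy⟩)
    have h2 := hsub i hi (show ((r i).2.1, (r i).2.2.2) ∈ closedRect (r i) from
      ⟨Set.right_mem_Icc.2 hx, Set.right_mem_Icc.2 hy⟩)
    exact ⟨⟨h1.1.1, hx.lt_of_ne fun h => hne (rectIncrOf_eq_zero_of_fst h), h2.1.2⟩,
      ⟨h1.2.1, hy.lt_of_ne fun h => hne (rectIncrOf_eq_zero_of_snd h), h2.2.2⟩⟩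
  obtain ⟨⟨ha, hab, hb⟩, ⟨hc, hcd, hd⟩⟩ := hcoord i₀ hi₀
  obtain ⟨x, hx, hxS⟩ := exists_partition_through_endpoints (ha.trans (hab.le.trans hb)) S
    (fun i => (r i).1) (fun i => (r i).2.1) fun i hi => (hcoord i hi).1
  obtain ⟨y, hy, hyS⟩ := exists_partition_through_endpoints (hc.trans (hcd.le.trans hd)) S
    (fun i => (r i).2.2.1) (fun i => (r i).2.2.2) fun i hi => (hcoord i hi).2
  choose! lx rx hlrx hrxL hlx hrx using hxS
  choose! ly ry hlry hryL hly hry using hyS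
  have hIr : ∀ i ∈ S, gridRect x y ((lx i, rx i), (ly i, ry i)) = r i := fun i hi => by
    simp [gridRect, hlx i hi, hrx i hi, hly i hi, hry i hi]
  refine card_mul_rpow_le_of_grid hρ hv hx hy S (fun i => ((lx i, rx i), (ly i, ry i)))
    (fun i hi => ⟨(hlrx i hi).le, hrxL i hi, (hlry i hi).le, hryL i hi⟩)
    (fun i hi j hj hij => ?_) fun i hi => ?_
  · simp only [hIr i hi, hIr j hj]
    exact hdisj hi hj hij
  · rw [hIr i hi]
    exact hlarge i hi

end Counting

section Summability

lemma natLog_add_three_le_rpow {τ : ℝ} (hτ : 0 < τ) {n : ℕ} (hn : 1 ≤ n) :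
    (Nat.log 2 n : ℝ) + 3 ≤ (1 / (τ * Real.log 2) + 3) * (n : ℝ) ^ τ := by
  have hlog2 : 0 < Real.log 2 := Real.log_pos one_lt_two
  have hpow : (2 : ℝ) ^ Nat.log 2 n ≤ n := by exact_mod_cast Nat.pow_log_le_self 2 (by omega)
  have hlog : (Nat.log 2 n : ℝ) * Real.log 2 * τ ≤ (n : ℝ) ^ τ := by
    rw [← le_div_iff₀ hτ]
    calc (Nat.log 2 n : ℝ) * Real.log 2 = Real.log ((2 : ℝ) ^ Nat.log 2 n) := by
          rw [Real.log_pow]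
      _ ≤ ((2 : ℝ) ^ Nat.log 2 n) ^ τ / τ := Real.log_le_rpow_div (by positivity) hτ
      _ ≤ (n : ℝ) ^ τ / τ := by gcongr
  have hone : 1 ≤ (n : ℝ) ^ τ := Real.one_le_rpow (by exact_mod_cast hn) hτ.le
  have hy : (Nat.log 2 n : ℝ) ≤ 1 / (τ * Real.log 2) * (n : ℝ) ^ τ := by
    rw [one_div_mul_eq_div, le_div_iff₀ (by positivity)]
    linarith
  linarith

lemma countingConst_le_rpow {ρ θ : ℝ} (hρ : 0 ≤ ρ) (hθ : 0 < θ) :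
    ∃ K, 0 < K ∧ ∀ n : ℕ, 1 ≤ n → countingConst ρ (Nat.log 2 n + 2) ≤ K * (n : ℝ) ^ θ := by
  set τ := θ / (2 + 2 * ρ)
  have hτ : 0 < τ := by positivity
  set M := 1 / (τ * Real.log 2) + 3
  have hM : 0 < M := by have := Real.log_pos one_lt_two; positivity
  refine ⟨M ^ 2 * (4 * M ^ 2) ^ ρ, by positivity, fun n hn => ?_⟩
  have hX : 0 < (n : ℝ) ^ τ := Real.rpow_pos_of_pos (by exact_mod_cast hn) τ
  have hL : ((Nat.log 2 n + 2 : ℕ) : ℝ) + 1 ≤ M * (n : ℝ) ^ τ := by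
    have := natLog_add_three_le_rpow hτ hn
    push_cast
    linarith
  have hθ' : (n : ℝ) ^ θ = ((n : ℝ) ^ τ) ^ (2 : ℝ) * (((n : ℝ) ^ τ) ^ (2 : ℝ)) ^ ρ := by
    rw [← Real.rpow_mul hX.le, ← Real.rpow_add hX, ← Real.rpow_mul (by positivity)]
    congr 1
    simp only [τ]
    field_simp
  calc countingConst ρ (Nat.log 2 n + 2)
      ≤ (M * (n : ℝ) ^ τ) ^ 2 * (4 * (M * (n : ℝ) ^ τ) ^ 2) ^ ρ := by
        unfold countingConst
        gcongr
    _ = M ^ 2 * (4 * M ^ 2) ^ ρ * (n : ℝ) ^ θ := by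
        rw [hθ', Real.rpow_two, mul_pow,
          show 4 * (M ^ 2 * ((n : ℝ) ^ τ) ^ 2) = 4 * M ^ 2 * ((n : ℝ) ^ τ) ^ 2 by ring,
          Real.mul_rpow (by positivity) (by positivity)]
        ring

lemma summable_countingConst_div_rpow {ρ γ : ℝ} (hρ : 0 ≤ ρ) (hγ : 1 < γ) :
    Summable fun n : ℕ => (countingConst ρ (Nat.log 2 n + 2) / n) ^ γ := by
  set θ := (γ - 1) / (2 * γ)
  have hγ0 : 0 < γ := by linarith
  have hθ : 0 < θ := div_pos (by linarith) (by linarith)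
  set e := (1 - θ) * γ
  have he : 1 < e := by
    simp only [e, θ]
    field_simp
    linarith
  obtain ⟨K, hK, hKC⟩ := countingConst_le_rpow hρ hθ
  have hC (n : ℕ) := (countingConst_pos ρ (Nat.log 2 n + 2)).le
  refine Summable.of_nonneg_of_le (fun n => Real.rpow_nonneg (div_nonneg (hC n) n.cast_nonneg) _)
    (fun n => ?_) ((Real.summable_nat_rpow_inv.2 he).mul_left (K ^ γ))
  rcases Nat.eq_zero_or_pos n with rfl | hn
  · simp [Real.zero_rpow hγ0.ne', Real.zero_rpow (by linarith : e ≠ 0)]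
  have hn' : (0 : ℝ) < n := by exact_mod_cast hn
  calc (countingConst ρ (Nat.log 2 n + 2) / n) ^ γ ≤ (K * (n : ℝ) ^ θ / n) ^ γ :=
        Real.rpow_le_rpow (div_nonneg (hC n) hn'.le)
          (div_le_div_of_nonneg_right (hKC n hn) hn'.le) hγ0.le
    _ = K ^ γ * ((n : ℝ) ^ e)⁻¹ := by
        rw [← Real.rpow_neg hn'.le, mul_div_assoc, ← Real.rpow_sub_one hn'.ne',
          Real.mul_rpow hK.le (by positivity), ← Real.rpow_mul hn'.le]
        congr 2
        ring

end Summability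

section Comparison

variable {ρ ρ' : ℝ} {f : ℝ → ℝ → ℝ} {a b c d : ℝ}

noncomputable def comparisonConst (ρ ρ' : ℝ) : ℝ :=
  ∑' n : ℕ, (countingConst ρ (Nat.log 2 n + 2) / n) ^ (ρ' / ρ)

lemma comparisonConst_pos (hρ : 0 < ρ) (hρρ' : ρ < ρ') : 0 < comparisonConst ρ ρ' := by
  have hC (n : ℕ) := (countingConst_pos ρ (Nat.log 2 n + 2)).le
  refine (summable_countingConst_div_rpow hρ.le ((one_lt_div hρ).2 hρρ')).tsum_pos
    (fun n => Real.rpow_nonneg (div_nonneg (hC n) n.cast_nonneg) _) 1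
    (Real.rpow_pos_of_pos (by rw [Nat.cast_one, div_one]; exact countingConst_pos _ _) _)

lemma rectSum_le {ι : Type*} [LinearOrder ι] (hρ : 0 < ρ) (hρρ' : ρ < ρ') (S : Finset ι)
    (r : ι → ℝ × ℝ × ℝ × ℝ) (hord : ∀ i ∈ S, (r i).1 ≤ (r i).2.1 ∧ (r i).2.2.1 ≤ (r i).2.2.2)
    (hsub : ∀ i ∈ S, closedRect (r i) ⊆ closedRect (a, b, c, d))
    (hdisj : (S : Set ι).Pairwise fun i j => Disjoint (openRect (r i)) (openRect (r j)))
    (hV : pVar2d ρ f a b c d ≠ ∞) :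
    rectSum ρ' f S r ≤ comparisonConst ρ ρ' * (pVar2d ρ f a b c d).toReal ^ ρ' := by
  classical
  set γ := ρ' / ρ
  have hγ : 1 < γ := (one_lt_div hρ).2 hρρ'
  set V := (pVar2d ρ f a b c d).toReal
  set ψ : ℕ → ℝ := fun n => (countingConst ρ (Nat.log 2 n + 2) / n) ^ γ
  have hC (n : ℕ) := (countingConst_pos ρ (Nat.log 2 n + 2)).le
  have hψ (n : ℕ) : 0 ≤ ψ n := Real.rpow_nonneg (div_nonneg (hC n) n.cast_nonneg) _
  set w : ι → ℝ := fun i => |rectIncrOf f (r i)|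
  set T : ι → Finset ι := fun i => {j ∈ S | toLex (w i, i) ≤ toLex (w j, j)}
  have hper : ∀ i ∈ S, w i ^ ρ' ≤ ψ #(T i) * V ^ ρ' := by
    intro i hi
    rcases (abs_nonneg (rectIncrOf f (r i))).eq_or_lt with h0 | hpos
    · rw [show w i = 0 from h0.symm, Real.zero_rpow (hρ.trans hρρ').ne']
      exact mul_nonneg (hψ _) (Real.rpow_nonneg ENNReal.toReal_nonneg _)
    have hTS : T i ⊆ S := Finset.filter_subset _ _
    have hA := card_mul_rpow_le (f := f) hρ hpos (T i) r (fun j hj => hord j (hTS hj))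
      (fun j hj => hsub j (hTS hj)) (hdisj.mono (Finset.coe_subset.2 hTS))
      (fun j hj => Prod.Lex.monotone_fst _ _ (Finset.mem_filter.1 hj).2)
    rw [← ENNReal.ofReal_toReal hV, ENNReal.ofReal_rpow_of_nonneg ENNReal.toReal_nonneg hρ.le,
      ← ENNReal.ofReal_mul (hC _),
      ENNReal.ofReal_le_ofReal_iff (mul_nonneg (hC _) (Real.rpow_nonneg ENNReal.toReal_nonneg _))]
      at hA
    have hN : (0 : ℝ) < #(T i) :=
      Nat.cast_pos.2 (Finset.card_pos.2 ⟨i, Finset.mem_filter.2 ⟨hi, le_rfl⟩⟩)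
    exact rpow_le_of_mul_rpow_le hρ (hρ.trans hρρ').le hN (abs_nonneg _) (hC _)
      ENNReal.toReal_nonneg hA
  have hinj : Set.InjOn (fun i => #(T i)) S :=
    S.injOn_card_filter_le fun i _ j _ h => congrArg (fun x => (ofLex x).2) h
  calc rectSum ρ' f S r ≤ ∑ i ∈ S, ψ #(T i) * V ^ ρ' := Finset.sum_le_sum hper
    _ = (∑ n ∈ S.image fun i => #(T i), ψ n) * V ^ ρ' := by
        rw [Finset.sum_mul, Finset.sum_image hinj]
    _ ≤ comparisonConst ρ ρ' * V ^ ρ' :=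
        mul_le_mul_of_nonneg_right
          ((summable_countingConst_div_rpow hρ.le hγ).sum_le_tsum _ fun n _ => hψ n)
          (Real.rpow_nonneg ENNReal.toReal_nonneg _)

lemma exists_pos_ofReal_mul_cVar2d_le (hρ : 0 < ρ) (hρρ' : ρ < ρ') :
    ∃ C : ℝ, 0 < C ∧ ∀ (f : ℝ → ℝ → ℝ) (a b c d : ℝ),
      ENNReal.ofReal C * cVar2d ρ' f a b c d ≤ pVar2d ρ f a b c d := by
  set K := comparisonConst ρ ρ'
  have hK : 0 < K := comparisonConst_pos hρ hρρ'
  have hρ' : 0 < ρ' := hρ.trans hρρ'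
  refine ⟨K ^ (-1 / ρ'), Real.rpow_pos_of_pos hK _, fun f a b c d => ?_⟩
  by_cases hV : pVar2d ρ f a b c d = ∞
  · simp [hV]
  have hc : cVar2d ρ' f a b c d ^ ρ' ≤ ENNReal.ofReal (K * (pVar2d ρ f a b c d).toReal ^ ρ') :=
    cVar2d_rpow_le hρ' fun k r hr => ENNReal.ofReal_le_ofReal <|
      rectSum_le hρ hρρ' (range k) r (fun i hi => hr.1 i (Finset.mem_range.1 hi))
        (fun i hi => hr.closedRect_subset (Finset.mem_range.1 hi))
        (fun i hi j hj hij => hr.2.2 i (Finset.mem_range.1 hi) j (Finset.mem_range.1 hj) hij) hV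
  rw [← ENNReal.rpow_le_rpow_iff hρ', ENNReal.mul_rpow_of_nonneg _ _ hρ'.le,
    ENNReal.ofReal_rpow_of_pos (Real.rpow_pos_of_pos hK _), ← Real.rpow_mul hK.le,
    div_mul_cancel₀ _ hρ'.ne', Real.rpow_neg_one]
  calc ENNReal.ofReal K⁻¹ * cVar2d ρ' f a b c d ^ ρ'
      ≤ ENNReal.ofReal K⁻¹ * ENNReal.ofReal (K * (pVar2d ρ f a b c d).toReal ^ ρ') := by
        gcongr
    _ = pVar2d ρ f a b c d ^ ρ' := by
        rw [← ENNReal.ofReal_mul (inv_nonneg.2 hK.le), inv_mul_cancel_left₀ hK.ne',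
          ← ENNReal.ofReal_rpow_of_nonneg ENNReal.toReal_nonneg hρ'.le, ENNReal.ofReal_toReal hV]

end Comparison

/-- **Friz–Victoir comparison of 2d variation and controlled 2d variation.**
For `ρ' > ρ ≥ 1` and continuous `f` of finite 2d `ρ`-variation:
`C_{ρ,ρ'} ⦀f⦀_{ρ'-var} ≤ ‖f‖_{ρ-var} ≤ ⦀f⦀_{ρ-var}`, the controlled `ρ'`-variation is
finite, `‖f‖_{ρ'-var}^{ρ'} ≤ ω := ⦀f⦀_{ρ'-var}^{ρ'}`, and `ω` is a superadditive 2d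
control (superadditive over rectangular partitions). -/
theorem controlled_variation_comparison
    (ρ ρ' : ℝ) (hρ : 1 ≤ ρ) (hρρ' : ρ < ρ') :
    ∃ C : ℝ, 0 < C ∧
      ∀ (T : ℝ) (f : ℝ → ℝ → ℝ),
        ContinuousOn (fun z : ℝ × ℝ => f z.1 z.2) (Set.Icc 0 T ×ˢ Set.Icc 0 T) →
        pVar2d ρ f 0 T 0 T ≠ ∞ →
        (∀ s₁ s₂ t₁ t₂ : ℝ, 0 ≤ s₁ → s₁ ≤ s₂ → s₂ ≤ T → 0 ≤ t₁ → t₁ ≤ t₂ → t₂ ≤ T →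
          cVar2d ρ' f s₁ s₂ t₁ t₂ ≠ ∞ ∧
          ENNReal.ofReal C * cVar2d ρ' f s₁ s₂ t₁ t₂ ≤ pVar2d ρ f s₁ s₂ t₁ t₂ ∧
          pVar2d ρ f s₁ s₂ t₁ t₂ ≤ cVar2d ρ f s₁ s₂ t₁ t₂ ∧
          pVar2d ρ' f s₁ s₂ t₁ t₂ ^ ρ' ≤ cVar2d ρ' f s₁ s₂ t₁ t₂ ^ ρ') ∧
        (∀ a b c d : ℝ, 0 ≤ a → a ≤ b → b ≤ T → 0 ≤ c → c ≤ d → d ≤ T →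
          ∀ (k : ℕ) (r : ℕ → ℝ × ℝ × ℝ × ℝ), IsRectPartition a b c d k r →
            ∑ i ∈ Finset.range k,
                cVar2d ρ' f (r i).1 (r i).2.1 (r i).2.2.1 (r i).2.2.2 ^ ρ'
              ≤ cVar2d ρ' f a b c d ^ ρ') := by
  have hρ0 : 0 < ρ := zero_lt_one.trans_le hρ
  have hρ'0 : 0 < ρ' := hρ0.trans hρρ'
  obtain ⟨C, hC, hcmp⟩ := exists_pos_ofReal_mul_cVar2d_le hρ0 hρρ'
  refine ⟨C, hC, fun T f _ hfin => ⟨fun s₁ s₂ t₁ t₂ h0s _ hsT h0t _ htT => ?_,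
    fun a b c d _ _ _ _ _ _ k r hr => sum_cVar2d_rpow_le hρ'0 hr⟩⟩
  have hsub : pVar2d ρ f s₁ s₂ t₁ t₂ ≠ ∞ :=
    ne_top_of_le_ne_top hfin (pVar2d_mono hρ0 h0s hsT h0t htT)
  refine ⟨fun htop => hsub (top_unique ?_), hcmp f s₁ s₂ t₁ t₂, pVar2d_le_cVar2d hρ0,
    ENNReal.rpow_le_rpow (pVar2d_le_cVar2d hρ'0) hρ'0.le⟩
  simpa [htop, ENNReal.mul_top, hC] using hcmp f s₁ s₂ t₁ t₂
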